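/- arXiv:math/0406063 — 2 statements merged into one kernel-verified Lean document; each statement's English description precedes it below -/
import Mathlib

section
/- In S4, ¬◇□φ implies ◇□(◇□φ → φ); consequently the formula ◇□(◇□φ → φ) is a theorem of S4 for every formula φ. -/
/-- Formulas of propositional modal logic. -/
inductive Formula where
  | atom : ℕ → Formula
  | falsum : Formula
  | imp : Formula → Formula → Formula
  | box : Formula → Formula

namespace Formula

/-- Negation: ¬φ := φ → ⊥. -/
def neg (φ : Formula) : Formula := φ.imp falsum

/-- Possibility: ◇φ := ¬□¬φ. -/
def dia (φ : Formula) : Formula := ((φ.neg).box).neg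

/-- Propositional evaluation, treating boxed formulas as opaque atoms. -/
def evalP (v : Formula → Prop) : Formula → Prop
  | atom n => v (atom n)
  | falsum => False
  | imp a b => evalP v a → evalP v b
  | box a => v (box a)

/-- φ is a substitution instance of a propositional tautology. -/
def IsTautInstance (φ : Formula) : Prop := ∀ v : Formula → Prop, φ.evalP v

end Formula

/-- Provability in the modal logic S4: all propositional tautologies, the K, T and 4
axiom schemes, modus ponens and necessitation. -/
inductive S4 : Formula → Prop
  | taut {φ : Formula} : φ.IsTautInstance → S4 φ
  | axK (φ ψ : Formula) : S4 (((φ.imp ψ).box).imp ((φ.box).imp (ψ.box)))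
  | axT (φ : Formula) : S4 ((φ.box).imp φ)
  | ax4 (φ : Formula) : S4 ((φ.box).imp ((φ.box).box))
  | mp {φ ψ : Formula} : S4 (φ.imp ψ) → S4 φ → S4 ψ
  | nec {φ : Formula} : S4 φ → S4 (φ.box)

open Formula

/-- Composition of provable implications. -/
lemma S4.comp {a b c : Formula} (h1 : S4 (a.imp b)) (h2 : S4 (b.imp c)) :
    S4 (a.imp c) := by
  have t : S4 ((a.imp b).imp ((b.imp c).imp (a.imp c))) :=
    S4.taut (fun v => by simp only [evalP]; tauto)
  exact S4.mp (S4.mp t h1) h2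

/-- Monotonicity of □. -/
lemma S4.monoBox {a b : Formula} (h : S4 (a.imp b)) : S4 ((a.box).imp (b.box)) :=
  S4.mp (S4.axK a b) (S4.nec h)

/-- Monotonicity of ◇. -/
lemma S4.monoDia {a b : Formula} (h : S4 (a.imp b)) : S4 ((a.dia).imp (b.dia)) := by
  have hcontra : S4 ((b.neg).imp (a.neg)) := by
    have t : S4 ((a.imp b).imp ((b.neg).imp (a.neg))) :=
      S4.taut (fun v => by simp only [evalP, neg]; tauto)
    exact S4.mp t h
  have hbox : S4 (((b.neg).box).imp ((a.neg).box)) := S4.monoBox hcontra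
  have t : S4 ((((b.neg).box).imp ((a.neg).box)).imp ((a.dia).imp (b.dia))) :=
    S4.taut (fun v => by simp only [evalP, neg, dia]; tauto)
  exact S4.mp t hbox

/-- ψ → ◇ψ (from axiom T). -/
lemma S4.toDia (ψ : Formula) : S4 (ψ.imp (ψ.dia)) := by
  have hT : S4 (((ψ.neg).box).imp (ψ.neg)) := S4.axT ψ.neg
  have t : S4 ((((ψ.neg).box).imp (ψ.neg)).imp (ψ.imp ψ.dia)) :=
    S4.taut (fun v => by simp only [evalP, neg, dia]; tauto)
  exact S4.mp t hT

/-- In S4, ¬◇□φ implies ◇□(◇□φ → φ); consequently ◇□(◇□φ → φ) is a theorem of S4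
for every formula φ. -/
theorem s4_dia_box_mp_instance :
    (∀ φ : Formula,
      S4 ((((φ.box).dia).neg).imp (((((φ.box).dia).imp φ).box).dia))) ∧
    (∀ φ : Formula, S4 (((((φ.box).dia).imp φ).box).dia)) := by
  have part1 : ∀ φ : Formula,
      S4 ((((φ.box).dia).neg).imp (((((φ.box).dia).imp φ).box).dia)) := by
    intro φ
    set D := (φ.box).dia with hD
    set B := ((φ.box).neg).box with hB
    -- ¬D → B  (double negation: D = ¬B)
    have h1 : S4 ((D.neg).imp B) :=
      S4.taut (fun v => by simp only [hD, hB, evalP, neg, dia]; tauto)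
    -- B → □B  (axiom 4)
    have h2 : S4 (B.imp (B.box)) := S4.ax4 ((φ.box).neg)
    -- B → (D → φ)   (since D = ¬B)
    have h3 : S4 (B.imp (D.imp φ)) :=
      S4.taut (fun v => by simp only [hD, hB, evalP, neg, dia]; tauto)
    -- □B → □(D → φ)
    have h4 : S4 ((B.box).imp ((D.imp φ).box)) := S4.monoBox h3
    -- □(D→φ) → ◇□(D→φ)
    have h5 : S4 (((D.imp φ).box).imp (((D.imp φ).box).dia)) := S4.toDia _
    exact S4.comp (S4.comp (S4.comp h1 h2) h4) h5
  refine ⟨part1, fun φ => ?_⟩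
  set D := (φ.box).dia with hD
  -- φ → (D → φ), so □φ → □(D→φ), so ◇□φ → ◇□(D→φ), i.e. D → ◇□(D→φ)
  have t1 : S4 (φ.imp (D.imp φ)) :=
    S4.taut (fun v => by simp only [evalP]; tauto)
  have hpos : S4 (D.imp (((D.imp φ).box).dia)) := S4.monoDia (S4.monoBox t1)
  have hneg := part1 φ
  -- case split
  have tcase : S4 ((D.imp (((D.imp φ).box).dia)).imp
      (((D.neg).imp (((D.imp φ).box).dia)).imp (((D.imp φ).box).dia))) :=
    S4.taut (fun v => by simp only [evalP, neg]; tauto)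
  exact S4.mp (S4.mp tcase hpos) hneg
end

section
/- There exists a family of functions e_α : α → ω, indexed by ordinals α with ω ≤ α < ω₁, such that (1) each e_α is injective, and (2) for all β with ω ≤ β < α < ω₁, the set {ξ < β : e_α(ξ) ≠ e_β(ξ)} is finite. -/
/-!
Build `e α` by recursion on `α < ω₁`, keeping every `e α` injective on `α` with coinfinite range
and almost equal to each earlier `e β` on `β`. At a successor the new point gets an unused value.
At a limit `α` take a cofinal sequence `α₀ < α₁ < ⋯` and extend from `αₙ` to `αₙ₊₁` by copying
`e αₙ₊₁`: it disagrees with the previous stage at finitely many points, so only finitely many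
collisions arise, and these are moved to values outside the coinfinite range of `e αₙ₊₁`. The
union of the stages is injective and coherent; moving each `αₙ` to `α₂ₙ` then frees infinitely
many values, which restores the coinfinite range.
-/
open Set Function

section Injections

variable {X Y : Type*}

def AlmostEqOn (s : Set X) (f g : X → Y) : Prop :=
  {x ∈ s | f x ≠ g x}.Finite

namespace AlmostEqOn

variable {s t : Set X} {f g k : X → Y}

lemma refl (s : Set X) (f : X → Y) : AlmostEqOn s f f := by
  simp [AlmostEqOn]

lemma symm (h : AlmostEqOn s f g) : AlmostEqOn s g f := by
  simpa only [AlmostEqOn, ne_comm] using h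

lemma trans (hfg : AlmostEqOn s f g) (hgk : AlmostEqOn s g k) : AlmostEqOn s f k :=
  (hfg.union hgk).subset fun x ⟨hx, hne⟩ =>
    (em (f x = g x)).elim (fun he => Or.inr ⟨hx, he ▸ hne⟩) fun hne' => Or.inl ⟨hx, hne'⟩

lemma mono (h : AlmostEqOn s f g) (hts : t ⊆ s) : AlmostEqOn t f g :=
  h.subset fun _ ⟨hx, hne⟩ => ⟨hts hx, hne⟩

end AlmostEqOn

lemma Set.EqOn.almostEqOn {s : Set X} {f g : X → Y} (h : EqOn f g s) : AlmostEqOn s f g := by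
  simp only [AlmostEqOn]
  convert finite_empty
  exact eq_empty_of_forall_notMem fun x ⟨hx, hne⟩ => hne (h hx)

lemma Set.InjOn.piecewise_union {s u : Set X} [∀ x, Decidable (x ∈ s)] {f g : X → Y}
    (hsu : Disjoint s u) (hf : InjOn f s) (hg : InjOn g u)
    (hfg : ∀ x ∈ s, ∀ y ∈ u, f x ≠ g y) : InjOn (s.piecewise f g) (s ∪ u) := by
  have hg' : EqOn (s.piecewise f g) g u := (piecewise_eqOn_compl s f g).mono hsu.subset_compl_left
  rw [injOn_union hsu]
  refine ⟨hf.congr (piecewise_eqOn s f g).symm, hg.congr hg'.symm, fun x hx y hy => ?_⟩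
  rw [piecewise_eqOn s f g hx, hg' hy]
  exact hfg x hx y hy

lemma Set.InjOn.exists_extend_insert {s : Set X} {f : X → Y} {a : X} (hf : InjOn f s)
    (hfs : (f '' s)ᶜ.Infinite) (ha : a ∉ s) :
    ∃ g : X → Y, EqOn g f s ∧ InjOn g (insert a s) ∧ (g '' insert a s)ᶜ.Infinite := by
  classical
  obtain ⟨b, hb⟩ := hfs.nonempty
  have hfg : EqOn (update f a b) f s := fun x hx => update_of_ne (ne_of_mem_of_not_mem hx ha) _ _
  refine ⟨update f a b, hfg, ?_, ?_⟩
  · rw [injOn_insert ha, hfg.image_eq, update_self]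
    exact ⟨hf.congr hfg.symm, hb⟩
  · rw [image_insert_eq, hfg.image_eq, update_self, ← union_singleton, compl_union]
    exact hfs.sdiff (finite_singleton b)

lemma AlmostEqOn.finite_sdiff_inter_preimage_image {s t : Set X} {h f : X → Y}
    (hhf : AlmostEqOn s h f) (hf : InjOn f t) (hst : s ⊆ t) :
    (t \ s ∩ f ⁻¹' (h '' s)).Finite := by
  -- If `f x = h y` with `h y = f y`, injectivity of `f` gives `x = y ∈ s`.
  refine ((hhf.image h).subset ?_).of_finite_image (hf.mono fun x hx => hx.1.1)
  rintro _ ⟨x, ⟨⟨hxt, hxs⟩, y, hys, hyx⟩, rfl⟩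
  refine ⟨y, ⟨hys, fun hfy => hxs ?_⟩, hyx⟩
  exact hf (hst hys) hxt (hfy ▸ hyx) ▸ hys

lemma AlmostEqOn.infinite_compl_image_union {s t : Set X} {h f : X → Y}
    (hhf : AlmostEqOn s h f) (hft : (f '' t)ᶜ.Infinite) (hst : s ⊆ t) :
    (f '' t ∪ h '' s)ᶜ.Infinite := by
  refine (hft.sdiff (hhf.image h)).mono ?_
  rintro _ ⟨hy_ft, hy_diff⟩ (hy | ⟨x, hxs, rfl⟩)
  · exact hy_ft hy
  · by_cases hxf : h x = f x
    · exact hy_ft ⟨x, hst hxs, hxf.symm⟩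
    · exact hy_diff ⟨x, ⟨hxs, hxf⟩, rfl⟩

lemma Set.InjOn.exists_eqOn_injOn_almostEqOn {s t : Set X} {h f : X → Y} (hh : InjOn h s)
    (hf : InjOn f t) (hft : (f '' t)ᶜ.Infinite) (hst : s ⊆ t) (hhf : AlmostEqOn s h f) :
    ∃ h' : X → Y, EqOn h' h s ∧ InjOn h' t ∧ AlmostEqOn t h' f := by
  classical
  set bad := t \ s ∩ f ⁻¹' (h '' s)
  set pool := (f '' t ∪ h '' s)ᶜ
  have hbad : bad.Finite := hhf.finite_sdiff_inter_preimage_image hf hst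
  have hpool : pool.Infinite := hhf.infinite_compl_image_union hft hst
  have : Nonempty Y := hpool.nonempty.to_subtype.map Subtype.val
  obtain ⟨c, hc_pool, hc_inj⟩ :=
    hbad.exists_injOn_of_encard_le (t := pool) (by rw [hpool.encard_eq]; exact le_top)
  have hk : InjOn (bad.piecewise c f) (t \ s) := by
    refine (hc_inj.piecewise_union disjoint_sdiff_right (hf.mono fun x hx => hx.1.1) ?_).mono
      (union_sdiff_cancel inter_subset_left).ge
    exact fun x hx y hy hxy => hc_pool hx (Or.inl ⟨y, hy.1.1, hxy.symm⟩)
  refine ⟨s.piecewise h (bad.piecewise c f), piecewise_eqOn _ _ _, ?_, ?_⟩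
  · refine (hh.piecewise_union disjoint_sdiff_right hk fun x hx y hy hxy => ?_).mono
      (union_sdiff_cancel hst).ge
    by_cases hyb : y ∈ bad
    · rw [piecewise_eq_of_mem _ _ _ hyb] at hxy
      exact hc_pool hyb (Or.inr ⟨x, hx, hxy⟩)
    · rw [piecewise_eq_of_notMem _ _ _ hyb] at hxy
      exact hyb ⟨hy, x, hx, hxy⟩
  · refine (hhf.union hbad).subset fun x ⟨hxt, hne⟩ => ?_
    by_cases hxs : x ∈ s
    · rw [piecewise_eq_of_mem _ _ _ hxs] at hne
      exact Or.inl ⟨hxs, hne⟩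
    · by_cases hxb : x ∈ bad
      · exact Or.inr hxb
      · simp [piecewise, hxs, hxb] at hne

lemma exists_injOn_iUnion_almostEqOn {S : ℕ → Set X} {f : ℕ → X → Y} (hS : Monotone S)
    (hinj : ∀ n, InjOn (f n) (S n)) (hcompl : ∀ n, (f n '' S n)ᶜ.Infinite)
    (hcoh : ∀ m n, m ≤ n → AlmostEqOn (S m) (f n) (f m)) :
    ∃ g : X → Y, InjOn g (⋃ n, S n) ∧ ∀ n, AlmostEqOn (S n) g (f n) := by
  classical
  have step (n : ℕ) (h : X → Y) (hh : InjOn h (S n)) (hhf : AlmostEqOn (S n) h (f n)) :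
      ∃ h', EqOn h' h (S n) ∧ InjOn h' (S (n + 1)) ∧ AlmostEqOn (S (n + 1)) h' (f (n + 1)) :=
    hh.exists_eqOn_injOn_almostEqOn (hinj _) (hcompl _) (hS n.le_succ)
      (hhf.trans (hcoh n _ n.le_succ).symm)
  choose! next hnext_eq hnext_inj hnext_almost using step
  let seq : ℕ → X → Y := fun n => Nat.rec (f 0) (fun k h => next k h) n
  have hseq (n : ℕ) : InjOn (seq n) (S n) ∧ AlmostEqOn (S n) (seq n) (f n) := by
    induction n with
    | zero => exact ⟨hinj 0, .refl _ _⟩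
    | succ n ih => exact ⟨hnext_inj n _ ih.1 ih.2, hnext_almost n _ ih.1 ih.2⟩
  have hstable {m n : ℕ} (hmn : m ≤ n) : EqOn (seq n) (seq m) (S m) := by
    induction n, hmn using Nat.le_induction with
    | base => exact eqOn_refl _ _
    | succ n hmn ih => exact ((hnext_eq n _ (hseq n).1 (hseq n).2).mono (hS hmn)).trans ih
  let g : X → Y := fun x => if hx : ∃ n, x ∈ S n then seq hx.choose x else seq 0 x
  have hg (n : ℕ) : EqOn g (seq n) (S n) := fun x hx => by
    have hx' : ∃ n, x ∈ S n := ⟨n, hx⟩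
    simp only [g, dif_pos hx']
    exact (hstable (le_max_left _ n) hx'.choose_spec).symm.trans
      (hstable (le_max_right _ n) hx)
  refine ⟨g, ?_, fun n => (hg n).almostEqOn.trans (hseq n).2⟩
  intro x hx y hy hxy
  obtain ⟨m, hxm⟩ := mem_iUnion.1 hx
  obtain ⟨n, hyn⟩ := mem_iUnion.1 hy
  have hx' := hS (le_max_left m n) hxm
  have hy' := hS (le_max_right m n) hyn
  exact (hseq _).1 hx' hy' ((hg _ hx').symm.trans (hxy.trans (hg _ hy')))

lemma Function.Injective.exists_injective_map_double {x : ℕ → X} (hx : Injective x) :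
    ∃ σ : X → X, Injective σ ∧ (∀ n, σ (x n) = x (2 * n)) ∧ ∀ y ∉ range x, σ y = y := by
  classical
  let σ : X → X := extend x (fun n => x (2 * n)) id
  have hσx (n : ℕ) : σ (x n) = x (2 * n) := hx.extend_apply _ _ _
  have hσ {y : X} (hy : y ∉ range x) : σ y = y := extend_apply' _ _ _ fun ⟨n, hn⟩ => hy ⟨n, hn⟩
  refine ⟨σ, fun y z hyz => ?_, hσx, fun y => hσ⟩
  by_cases hy : y ∈ range x <;> by_cases hz : z ∈ range x
  · obtain ⟨a, rfl⟩ := hy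
    obtain ⟨b, rfl⟩ := hz
    rw [hσx, hσx] at hyz
    have := hx hyz
    rw [show a = b by omega]
  · obtain ⟨a, rfl⟩ := hy
    exact absurd ⟨2 * a, ((hσx a).symm.trans hyz).trans (hσ hz)⟩ hz
  · obtain ⟨b, rfl⟩ := hz
    exact absurd ⟨2 * b, ((hσx b).symm.trans hyz.symm).trans (hσ hy)⟩ hy
  · rwa [hσ hy, hσ hz] at hyz

lemma Set.InjOn.exists_almostEqOn_compl_image_infinite {U : Set X} {g : X → Y} (hg : InjOn g U)
    {x : ℕ → X} (hx : Injective x) (hxU : ∀ n, x n ∈ U) :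
    ∃ g' : X → Y, InjOn g' U ∧ (g' '' U)ᶜ.Infinite ∧
      ∀ s : Set X, {n | x n ∈ s}.Finite → AlmostEqOn s g' g := by
  -- Hilbert's hotel: moving each `x n` to `x (2 * n)` frees the values `g (x (2 * n + 1))`.
  obtain ⟨σ, hσ_inj, hσx, hσ⟩ := hx.exists_injective_map_double
  have hσU : MapsTo σ U U := fun y hy => by
    by_cases h : y ∈ range x
    · obtain ⟨n, rfl⟩ := h
      exact hσx n ▸ hxU _
    · exact (hσ y h).symm ▸ hy
  have hσ_odd (n : ℕ) : x (2 * n + 1) ∉ range σ := by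
    rintro ⟨y, hy⟩
    by_cases h : y ∈ range x
    · obtain ⟨m, rfl⟩ := h
      have := hx ((hσx m).symm.trans hy)
      omega
    · exact h ⟨2 * n + 1, (hσ y h ▸ hy).symm⟩
  have hodd : Injective fun n => g (x (2 * n + 1)) := fun a b hab => by
    have := hx (hg (hxU _) (hxU _) hab)
    omega
  refine ⟨g ∘ σ, hg.comp hσ_inj.injOn hσU, ?_, fun s hs => ?_⟩
  · refine (infinite_range_of_injective hodd).mono ?_
    rintro _ ⟨n, rfl⟩ ⟨y, hy, hyn⟩
    exact hσ_odd n ⟨y, hg (hσU hy) (hxU _) hyn⟩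
  · refine (hs.image x).subset fun y ⟨hys, hne⟩ => ?_
    by_cases h : y ∈ range x
    · obtain ⟨n, rfl⟩ := h
      exact ⟨n, hys, rfl⟩
    · exact absurd (congrArg g (hσ y h)) hne

end Injections

lemma Order.IsSuccLimit.exists_strictMono_cofinal {α : Type*} [LinearOrder α] {a : α}
    (ha : IsSuccLimit a) (hc : (Iio a).Countable) :
    ∃ s : ℕ → α, StrictMono s ∧ (∀ n, s n < a) ∧ ∀ b < a, ∃ n, b < s n := by
  have : Countable (Iio a) := hc.to_subtype
  have : Nonempty (Iio a) :=
    let ⟨b, hb⟩ := not_isMin_iff.1 ha.not_isMin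
    ⟨⟨b, hb⟩⟩
  have : NoMaxOrder (Iio a) := ⟨fun b =>
    let ⟨c, hc, hbc⟩ := ha.isSuccPrelimit.lt_iff_exists_lt.1 b.2
    ⟨⟨c, hc⟩, hbc⟩⟩
  obtain ⟨u, -, hu⟩ := Filter.exists_seq_monotone_tendsto_atTop_atTop (Iio a)
  obtain ⟨φ, hφ, hmono⟩ := Filter.strictMono_subseq_of_tendsto_atTop hu
  refine ⟨fun n => u (φ n), fun m n h => hmono h, fun n => (u (φ n)).2, fun b hb => ?_⟩
  obtain ⟨c, hc⟩ := exists_gt (⟨b, hb⟩ : Iio a)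
  obtain ⟨n, hn⟩ := ((hu.comp hφ.tendsto_atTop).eventually_ge_atTop c).exists
  exact ⟨n, hc.trans_le hn⟩

lemma Ordinal.countable_Iio_of_lt_ord_aleph_one {α : Ordinal} (hα : α < (Cardinal.aleph 1).ord) :
    (Iio α).Countable := by
  rw [← Cardinal.le_aleph0_iff_set_countable, Cardinal.mk_Iio_ordinal, Cardinal.lift_le_aleph0,
    ← Cardinal.lt_aleph_one_iff]
  exact Cardinal.lt_ord.1 hα

def IsCoherentExtension (α : Ordinal) (E : (β : Ordinal) → β < α → Ordinal → ℕ)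
    (g : Ordinal → ℕ) : Prop :=
  InjOn g (Iio α) ∧ (g '' Iio α)ᶜ.Infinite ∧ ∀ β (hβ : β < α), AlmostEqOn (Iio β) g (E β hβ)

/-- Stage `α` is an arbitrary coherent extension of the earlier stages (junk if none exists). -/
noncomputable def coherentFamily : Ordinal → Ordinal → ℕ :=
  Ordinal.lt_wf.fix fun α E => Classical.epsilon (IsCoherentExtension α E)

lemma isCoherentExtension_coherentFamily_of_exists {α : Ordinal}
    (h : ∃ g, IsCoherentExtension α (fun β _ => coherentFamily β) g) :
    IsCoherentExtension α (fun β _ => coherentFamily β) (coherentFamily α) := by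
  rw [coherentFamily, Ordinal.lt_wf.fix_eq]
  exact Classical.epsilon_spec h

section Extension

variable {E : Ordinal → Ordinal → ℕ}

lemma IsCoherentExtension.almostEqOn_of_le {β γ : Ordinal}
    (hE : IsCoherentExtension β (fun γ _ => E γ) (E β)) (hγ : γ ≤ β) :
    AlmostEqOn (Iio γ) (E β) (E γ) :=
  hγ.eq_or_lt.elim (fun h => h ▸ .refl _ _) (hE.2.2 γ)

lemma exists_isCoherentExtension_zero : ∃ g, IsCoherentExtension 0 (fun γ _ => E γ) g :=
  ⟨fun _ => 0, by simp [IsCoherentExtension, infinite_univ]⟩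

lemma exists_isCoherentExtension_succ {β : Ordinal}
    (hE : IsCoherentExtension β (fun γ _ => E γ) (E β)) :
    ∃ g, IsCoherentExtension (Order.succ β) (fun γ _ => E γ) g := by
  obtain ⟨g, hgE, hg_inj, hg_compl⟩ := hE.1.exists_extend_insert hE.2.1 (lt_irrefl β)
  rw [← Order.Iio_succ_eq_insert] at hg_inj hg_compl
  refine ⟨g, hg_inj, hg_compl, fun γ hγ => ?_⟩
  have hγβ := Order.lt_succ_iff.1 hγ
  exact ((hgE.mono (Iio_subset_Iio hγβ)).almostEqOn).trans (hE.almostEqOn_of_le hγβ)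

lemma exists_isCoherentExtension_of_isSuccLimit {α : Ordinal} (hα : Order.IsSuccLimit α)
    (hαc : (Iio α).Countable) (hE : ∀ β < α, IsCoherentExtension β (fun γ _ => E γ) (E β)) :
    ∃ g, IsCoherentExtension α (fun γ _ => E γ) g := by
  obtain ⟨s, hs, hsα, hs_cofinal⟩ := hα.exists_strictMono_cofinal hαc
  have hE' (n : ℕ) := hE (s n) (hsα n)
  obtain ⟨g₀, hg₀_inj, hg₀E⟩ := exists_injOn_iUnion_almostEqOn (S := fun n => Iio (s n))
    (fun m n h => Iio_subset_Iio (hs.monotone h)) (fun n => (hE' n).1) (fun n => (hE' n).2.1)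
    (fun m n h => (hE' n).almostEqOn_of_le (hs.monotone h))
  have hU : (⋃ n, Iio (s n)) = Iio α :=
    Subset.antisymm (iUnion_subset fun n => Iio_subset_Iio (hsα n).le)
      fun ξ hξ => mem_iUnion.2 (hs_cofinal ξ hξ)
  rw [hU] at hg₀_inj
  obtain ⟨g, hg_inj, hg_compl, hgg₀⟩ :=
    hg₀_inj.exists_almostEqOn_compl_image_infinite hs.injective hsα
  refine ⟨g, hg_inj, hg_compl, fun β hβ => ?_⟩
  obtain ⟨n, hn⟩ := hs_cofinal β hβ
  have hg : AlmostEqOn (Iio (s n)) g (E (s n)) :=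
    (hgg₀ _ ((finite_lt_nat n).subset fun m hm => hs.lt_iff_lt.1 hm)).trans (hg₀E n)
  exact (hg.mono (Iio_subset_Iio hn.le)).trans ((hE' n).2.2 β hn)

end Extension

lemma isCoherentExtension_coherentFamily {α : Ordinal} (hα : α < (Cardinal.aleph 1).ord) :
    IsCoherentExtension α (fun β _ => coherentFamily β) (coherentFamily α) := by
  induction α using WellFoundedLT.induction with
  | _ α ih =>
    refine isCoherentExtension_coherentFamily_of_exists ?_
    have hE : ∀ β < α, IsCoherentExtension β (fun γ _ => coherentFamily γ) (coherentFamily β) :=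
      fun β hβ => ih β hβ (hβ.trans hα)
    rcases Ordinal.zero_or_succ_or_isSuccLimit α with rfl | ⟨β, rfl⟩ | hlim
    · exact exists_isCoherentExtension_zero
    · exact exists_isCoherentExtension_succ (hE β (Order.lt_succ β))
    · exact exists_isCoherentExtension_of_isSuccLimit hlim
        (Ordinal.countable_Iio_of_lt_ord_aleph_one hα) hE

/-- There exists an almost-coherent sequence of injections: a family of functions
`e α : α → ω` for ordinals `ω ≤ α < ω₁` such that each `e α` is injective and any
two members of the family agree on all but finitely many points of their common
domain. -/
theorem exists_almost_coherent_sequence :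
    ∃ e : (α : Ordinal) → Set.Iio α → ℕ,
      ∀ α : Ordinal, Ordinal.omega0 ≤ α → α < (Cardinal.aleph 1).ord →
        Function.Injective (e α) ∧
        ∀ β : Ordinal, Ordinal.omega0 ≤ β → ∀ h : β < α,
          {ξ : Set.Iio β | e α ⟨ξ.1, lt_trans ξ.2 h⟩ ≠ e β ξ}.Finite := by
  refine ⟨fun α ξ => coherentFamily α ξ, fun α _ hα => ?_⟩
  obtain ⟨hinj, -, hcoh⟩ := isCoherentExtension_coherentFamily hα
  refine ⟨hinj.injective, fun β _ hβ => ?_⟩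
  exact ((hcoh β hβ).preimage Subtype.val_injective.injOn).subset fun ξ hξ => ⟨ξ.2, hξ⟩
end
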